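/- arXiv:1705.09444 — 3 statements merged into one kernel-verified Lean document; each statement's English description precedes it below -/
import Mathlib

section
/- Committing to the truthful ranking may not be optimal for the leader: there exists a two-agent instance with four items, picking sequence 1212, a utility function u_1 for agent 1 consistent with his truthful preference ≻_1, and a utility function u_2 for agent 2 consistent with his truthful preference ≻_2, such that for some ranking R ≠ ≻_1, the leader's Stackelberg payoff satisfies V(R) > V(≻_1). -/
open Finset

section SeqAlloc

variable {A : Type*} [DecidableEq A] {α : Type*} [DecidableEq α]

/-- One run of sequential allocation: the list of (agent, item) pick events.
At each turn the scheduled agent receives his most preferred not-yet-taken item. -/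
def SAevents (prefs : A → List α) : List A → List α → List (A × α)
  | [], _ => []
  | a :: rest, taken =>
    match ((prefs a).filter (fun o => !(taken.contains o))).head? with
    | some o => (a, o) :: SAevents prefs rest (o :: taken)
    | none => SAevents prefs rest taken

/-- The order in which items are picked under picking sequence `π` and reports `prefs`. -/
def pickOrder (π : List A) (prefs : A → List α) : List α :=
  (SAevents prefs π []).map Prod.snd

/-- The set of items that agent `i` receives. -/
def SAalloc (π : List A) (prefs : A → List α) (i : A) : Finset α :=
  (((SAevents prefs π []).filter (fun p => p.1 == i)).map Prod.snd).toFinset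

/-- A valid ranking (strict total order) on the items, given as an ordered list of all items. -/
def IsRanking [Fintype α] (L : List α) : Prop := L.Nodup ∧ ∀ o : α, o ∈ L

/-- `o` is strictly preferred to `o'` according to ranking `L`. -/
def Prefers (L : List α) (o o' : α) : Prop := L.idxOf o < L.idxOf o'

instance (L : List α) (o o' : α) : Decidable (Prefers L o o') :=
  inferInstanceAs (Decidable (L.idxOf o < L.idxOf o'))

/-- `u` is a positive utility function consistent with ranking `L`. -/
def Consistent (L : List α) (u : α → ℝ) : Prop :=
  (∀ o, 0 < u o) ∧ ∀ o o', u o > u o' ↔ Prefers L o o'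

/-- Additive utility of a set of items. -/
def utilOf (u : α → ℝ) (S : Finset α) : ℝ := ∑ o ∈ S, u o

/-- `u` is lexicographic for ranking `L` : each item is worth more than
all strictly less preferred items together. -/
def Lexicographic [Fintype α] (L : List α) (u : α → ℝ) : Prop :=
  ∀ o : α, (∑ o' ∈ univ.filter (fun o' => Prefers L o o'), u o') < u o

/-- The reported profile `prof` is a pure Nash equilibrium under utilities `u`. -/
def IsPNE [Fintype α] (π : List A) (prof : A → List α) (u : A → α → ℝ) : Prop :=
  ∀ i (r : List α), IsRanking r →
    utilOf (u i) (SAalloc π (Function.update prof i r) i) ≤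
      utilOf (u i) (SAalloc π prof i)

/-- The bluff profile: everyone reports the order in which items are picked
under the truthful profile. -/
def bluff (π : List A) (truth : A → List α) : A → List α := fun _ => pickOrder π truth

/-- Swap the two agents. -/
def swapAgents : Fin 2 → Fin 2 := fun a => if a = 0 then 1 else 0

/-- The common report of the crossout profile: reverse and invert the picking sequence,
reverse both preferences, run SA and reverse the resulting picking order. -/
def crossoutList (π : List (Fin 2)) (truth : Fin 2 → List α) : List α :=
  (pickOrder (π.reverse.map swapAgents) (fun i => (truth i).reverse)).reverse

/-- The crossout profile: both agents report `crossoutList`. -/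
def crossout (π : List (Fin 2)) (truth : Fin 2 → List α) : Fin 2 → List α :=
  fun _ => crossoutList π truth

/-- `S` is at least as preferred as `T` w.r.t. pairwise comparisons under strict order `r`. -/
def AtLeastPC (r : α → α → Prop) (S T : Finset α) : Prop :=
  ∃ f : α → α, Set.InjOn f T ∧ (∀ o ∈ T, f o ∈ S) ∧ ∀ o ∈ T, f o = o ∨ r (f o) o

/-- An assignment: every item is held by exactly one agent. -/
def IsAssignment (q : A → Finset α) : Prop := ∀ o : α, ∃! i : A, o ∈ q i

/-- The assignment `p` is Pareto optimal with respect to pairwise comparisons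
under truthful preferences `truth`. -/
def ParetoOptPC (truth : A → List α) (p : A → Finset α) : Prop :=
  ¬ ∃ q : A → Finset α, IsAssignment q ∧
      (∀ i, AtLeastPC (Prefers (truth i)) (q i) (p i)) ∧
      ∃ i, AtLeastPC (Prefers (truth i)) (q i) (p i) ∧
        ¬ AtLeastPC (Prefers (truth i)) (p i) (q i)

/-- `r2` is a best response of agent 2 (index `1`) to the leader's ranking `R`. -/
def BestResp2 [Fintype α] (π : List (Fin 2)) (R : List α) (u2 : α → ℝ) (r2 : List α) : Prop :=
  IsRanking r2 ∧ ∀ r2', IsRanking r2' →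
    utilOf u2 (SAalloc π ![R, r2'] 1) ≤ utilOf u2 (SAalloc π ![R, r2] 1)

/-- The leader's Stackelberg payoff: the best payoff for agent 1 over the
best responses of agent 2 (ties broken in agent 1's favour). -/
noncomputable def stackV [Fintype α] (π : List (Fin 2)) (u1 u2 : α → ℝ) (R : List α) : ℝ :=
  sSup {v : ℝ | ∃ r2, BestResp2 π R u2 r2 ∧ v = utilOf u1 (SAalloc π ![R, r2] 0)}

/-- A token move: one token at position `j` moves to a free later position `j' < mm`. -/
def MoveStep (mm : ℕ) (T T' : Finset ℕ) : Prop :=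
  ∃ j ∈ T, ∃ j', j' < mm ∧ j' ∉ T ∧ j < j' ∧ T' = insert j' (T.erase j)

/-- One replacement: exchange an item of the set for a strictly more preferred item
not in the set. -/
def ReplaceStep (r : α → α → Prop) (T T' : Finset α) : Prop :=
  ∃ x ∈ T, ∃ y, y ∉ T ∧ r y x ∧ T' = insert y (T.erase x)

end SeqAlloc


namespace NotOptimalAux

abbrev T0 : List (Fin 4) := [0,1,2,3]
abbrev T1 : List (Fin 4) := [1,3,2,0]
abbrev RR : List (Fin 4) := [1,0,2,3]
def v1 : Fin 4 → ℕ := ![8,4,2,1]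
def v2 : Fin 4 → ℕ := ![1,8,2,4]
noncomputable abbrev U1 : Fin 4 → ℝ := fun o => (v1 o : ℝ)
noncomputable abbrev U2 : Fin 4 → ℝ := fun o => (v2 o : ℝ)

lemma rank_enum (L : List (Fin 4)) (h : IsRanking L) :
    L ∈ ([0,1,2,3] : List (Fin 4)).permutations' := by
  rw [List.mem_permutations']
  exact (List.perm_ext_iff_of_nodup h.1 (by decide)).mpr
    fun a => iff_of_true (h.2 a) (by fin_cases a <;> decide)

lemma keyA : ∀ r2 ∈ ([0,1,2,3] : List (Fin 4)).permutations',
    (SAalloc [0,1,0,1] ![RR, r2] 1 = {0,3} ∧ SAalloc [0,1,0,1] ![RR, r2] 0 = {1,2}) ∨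
    (SAalloc [0,1,0,1] ![RR, r2] 1 = {2,3} ∧ SAalloc [0,1,0,1] ![RR, r2] 0 = {0,1}) := by
  decide

lemma keyB : ∀ r2 ∈ ([0,1,2,3] : List (Fin 4)).permutations',
    (SAalloc [0,1,0,1] ![T0, r2] 1 = {1,3} ∧ SAalloc [0,1,0,1] ![T0, r2] 0 = {0,2}) ∨
    (SAalloc [0,1,0,1] ![T0, r2] 1 = {2,3} ∧ SAalloc [0,1,0,1] ![T0, r2] 0 = {0,1}) := by
  decide

lemma u2_03 : utilOf U2 ({0,3} : Finset (Fin 4)) = 5 := by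
  rw [utilOf, Finset.sum_pair (by decide)]
  show ((v2 0 : ℝ) + v2 3) = 5
  norm_num [show v2 0 = 1 from by decide, show v2 3 = 4 from by decide]
lemma u2_23 : utilOf U2 ({2,3} : Finset (Fin 4)) = 6 := by
  rw [utilOf, Finset.sum_pair (by decide)]
  show ((v2 2 : ℝ) + v2 3) = 6
  norm_num [show v2 2 = 2 from by decide, show v2 3 = 4 from by decide]
lemma u2_13 : utilOf U2 ({1,3} : Finset (Fin 4)) = 12 := by
  rw [utilOf, Finset.sum_pair (by decide)]
  show ((v2 1 : ℝ) + v2 3) = 12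
  norm_num [show v2 1 = 8 from by decide, show v2 3 = 4 from by decide]
lemma u1_01 : utilOf U1 ({0,1} : Finset (Fin 4)) = 12 := by
  rw [utilOf, Finset.sum_pair (by decide)]
  show ((v1 0 : ℝ) + v1 1) = 12
  norm_num [show v1 0 = 8 from by decide, show v1 1 = 4 from by decide]
lemma u1_02 : utilOf U1 ({0,2} : Finset (Fin 4)) = 10 := by
  rw [utilOf, Finset.sum_pair (by decide)]
  show ((v1 0 : ℝ) + v1 2) = 10
  norm_num [show v1 0 = 8 from by decide, show v1 2 = 2 from by decide]

lemma wA_alloc1 : SAalloc [0,1,0,1] ![RR, [2,3,0,1]] 1 = ({2,3} : Finset (Fin 4)) := by decide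
lemma wA_alloc0 : SAalloc [0,1,0,1] ![RR, [2,3,0,1]] 0 = ({0,1} : Finset (Fin 4)) := by decide
lemma wB_alloc1 : SAalloc [0,1,0,1] ![T0, T1] 1 = ({1,3} : Finset (Fin 4)) := by decide
lemma wB_alloc0 : SAalloc [0,1,0,1] ![T0, T1] 0 = ({0,2} : Finset (Fin 4)) := by decide

lemma rank_w : IsRanking ([2,3,0,1] : List (Fin 4)) :=
  ⟨by decide, fun o => by fin_cases o <;> decide⟩
lemma rank_T1 : IsRanking T1 :=
  ⟨by decide, fun o => by fin_cases o <;> decide⟩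
lemma rank_T0 : IsRanking T0 :=
  ⟨by decide, fun o => by fin_cases o <;> decide⟩
lemma rank_RR : IsRanking RR :=
  ⟨by decide, fun o => by fin_cases o <;> decide⟩

lemma bestA : BestResp2 [0,1,0,1] RR U2 [2,3,0,1] := by
  refine ⟨rank_w, ?_⟩
  intro r2' hr'
  rw [wA_alloc1, u2_23]
  rcases keyA r2' (rank_enum r2' hr') with ⟨h1, _⟩ | ⟨h1, _⟩ <;> rw [h1]
  · rw [u2_03]; norm_num
  · rw [u2_23]

lemma bestB : BestResp2 [0,1,0,1] T0 U2 T1 := by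
  refine ⟨rank_T1, ?_⟩
  intro r2' hr'
  rw [wB_alloc1, u2_13]
  rcases keyB r2' (rank_enum r2' hr') with ⟨h1, _⟩ | ⟨h1, _⟩ <;> rw [h1]
  · rw [u2_13]
  · rw [u2_23]; norm_num

lemma setA : {v : ℝ | ∃ r2, BestResp2 [0,1,0,1] RR U2 r2 ∧
    v = utilOf U1 (SAalloc [0,1,0,1] ![RR, r2] 0)} = {12} := by
  ext v
  simp only [Set.mem_setOf_eq, Set.mem_singleton_iff]
  constructor
  · rintro ⟨r2, hbr, rfl⟩
    rcases keyA r2 (rank_enum r2 hbr.1) with ⟨h1, h0⟩ | ⟨h1, h0⟩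
    · exfalso
      have := hbr.2 [2,3,0,1] rank_w
      rw [wA_alloc1, u2_23, h1, u2_03] at this; norm_num at this
    · rw [h0, u1_01]
  · rintro rfl
    exact ⟨[2,3,0,1], bestA, by rw [wA_alloc0, u1_01]⟩

lemma setB : {v : ℝ | ∃ r2, BestResp2 [0,1,0,1] T0 U2 r2 ∧
    v = utilOf U1 (SAalloc [0,1,0,1] ![T0, r2] 0)} = {10} := by
  ext v
  simp only [Set.mem_setOf_eq, Set.mem_singleton_iff]
  constructor
  · rintro ⟨r2, hbr, rfl⟩
    rcases keyB r2 (rank_enum r2 hbr.1) with ⟨h1, h0⟩ | ⟨h1, h0⟩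
    · rw [h0, u1_02]
    · exfalso
      have := hbr.2 T1 rank_T1
      rw [wB_alloc1, u2_13, h1, u2_23] at this; norm_num at this
  · rintro rfl
    exact ⟨T1, bestB, by rw [wB_alloc0, u1_02]⟩

lemma consU1 : Consistent T0 U1 := by
  constructor
  · intro o
    exact_mod_cast Nat.cast_pos.mpr ((by decide : ∀ o, 0 < v1 o) o)
  · intro o o'
    show (v1 o' : ℝ) < v1 o ↔ Prefers T0 o o'
    rw [Nat.cast_lt]
    exact (by decide : ∀ o o' : Fin 4, v1 o' < v1 o ↔ Prefers T0 o o') o o'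

lemma consU2 : Consistent T1 U2 := by
  constructor
  · intro o
    exact_mod_cast Nat.cast_pos.mpr ((by decide : ∀ o, 0 < v2 o) o)
  · intro o o'
    show (v2 o' : ℝ) < v2 o ↔ Prefers T1 o o'
    rw [Nat.cast_lt]
    exact (by decide : ∀ o o' : Fin 4, v2 o' < v2 o ↔ Prefers T1 o o') o o'

end NotOptimalAux

/-- Committing to the truthful ranking may not be optimal for the leader:
in some two-agent, four-item instance with picking sequence 1212 there is a ranking `R`
different from the leader's truthful preference with strictly larger Stackelberg payoff. -/
theorem truthful_commitment_not_optimal :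
    ∃ (truth : Fin 2 → List (Fin 4)) (u1 u2 : Fin 4 → ℝ) (R : List (Fin 4)),
      (∀ i, IsRanking (truth i)) ∧
      Consistent (truth 0) u1 ∧ Consistent (truth 1) u2 ∧
      IsRanking R ∧ R ≠ truth 0 ∧
      stackV [0, 1, 0, 1] u1 u2 (truth 0) < stackV [0, 1, 0, 1] u1 u2 R  := by
  classical
  open NotOptimalAux in
  refine ⟨![T0, T1], U1, U2, RR, ?_, consU1, consU2, rank_RR, by decide, ?_⟩
  · intro i; fin_cases i
    · exact rank_T0
    · exact rank_T1
  · show stackV [0,1,0,1] U1 U2 T0 < stackV [0,1,0,1] U1 U2 RR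
    rw [stackV, stackV, setA, setB, csSup_singleton, csSup_singleton]
    norm_num
end

section
/- Representative-agent reduction: fix an agent i, a picking sequence π of length m for n agents, and suppose every agent in N∖{i} reports the same preference order ≻*. Let π′ be the picking sequence for two agents {i, r} obtained from π by replacing every entry not equal to i by r, and let agent r report ≻*. Then for every report ≻″_i of agent i, agent i's allocation in the n-agent game equals his allocation in the two-agent game: SA(π, (≻″_i, ≻*, …, ≻*))(i) = SA(π′, (≻″_i, ≻*))(i). -/
open Finset

lemma SAevents_map_repr {n m : ℕ} (i : Fin n) (pstar r : List (Fin m)) :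
    ∀ (π : List (Fin n)) (taken : List (Fin m)),
      SAevents ![r, pstar] (π.map fun a => if a = i then (0 : Fin 2) else 1) taken
        = (SAevents (Function.update (fun _ => pstar) i r) π taken).map
            (fun p => ((if p.1 = i then (0 : Fin 2) else 1), p.2)) := by
  intro π
  induction π with
  | nil => intro taken; simp [SAevents]
  | cons a rest ih =>
    intro taken
    have hpref : (![r, pstar] : Fin 2 → List (Fin m)) (if a = i then (0 : Fin 2) else 1)
        = Function.update (fun _ => pstar) i r a := by
      by_cases h : a = i <;> simp [h, Function.update]
    simp only [List.map_cons, SAevents, hpref]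
    cases hh : ((Function.update (fun _ => pstar) i r a).filter
        (fun o => !(taken.contains o))).head? with
    | none => simpa [hh] using ih taken
    | some o => simp [hh, ih (o :: taken)]

/-- Representative-agent reduction: if all agents other than `i` report
the same ranking `pstar`, then agent `i`'s allocation equals his allocation in the
two-agent game in which a single representative agent takes all the other turns. -/
theorem representative_agent_reduction {n m : ℕ} (π : List (Fin n)) (i : Fin n)
    (pstar r : List (Fin m)) (hπ : π.length = m)
    (hps : IsRanking pstar) (hr : IsRanking r) :
    SAalloc π (Function.update (fun _ => pstar) i r) i =
      SAalloc (π.map fun a => if a = i then (0 : Fin 2) else 1) ![r, pstar] 0 := by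
  unfold SAalloc
  rw [SAevents_map_repr i pstar r π []]
  congr 1
  rw [List.filter_map, List.map_map]
  congr 1
  apply List.filter_congr
  intro p _
  by_cases h : p.1 = i <;> simp [h, Function.comp]
end

section
/- Characterization of strict pairwise-comparison preference for equal-size sets: let ≻_i be a strict total order on a finite set of items, and let S, T be finite sets of items with |S| = |T|. Then agent i strictly prefers S over T with respect to pairwise comparisons (i.e., S is at least as preferred as T but T is not at least as preferred as S) if and only if S results from T by a finite nonempty sequence of replacements, each replacing one item of the current set with a strictly more preferred item (with respect to ≻_i) not in the current set. -/
open Finset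

set_option linter.unusedSectionVars false

section Aux
variable {α : Type*} [DecidableEq α] [LinearOrder α]

lemma counts_of_atLeastPC {S T : Finset α} (h : AtLeastPC (· < ·) S T) (p : α → Prop)
    [DecidablePred p] (hp : ∀ a b : α, a ≤ b → p b → p a) :
    (T.filter p).card ≤ (S.filter p).card := by
  obtain ⟨f, finj, fmem, fle⟩ := h
  apply Finset.card_le_card_of_injOn f
  · intro a ha
    rw [Finset.mem_coe, Finset.mem_filter] at ha ⊢
    refine ⟨fmem a ha.1, hp _ _ ?_ ha.2⟩
    rcases fle a ha.1 with h | h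
    · exact h.le
    · exact h.le
  · exact finj.mono (fun a ha => (Finset.mem_filter.1 ha).1)

lemma atLeastPC_of_counts {S T : Finset α}
    (h : ∀ t : α, (T.filter (· ≤ t)).card ≤ (S.filter (· ≤ t)).card) :
    AtLeastPC (· < ·) S T := by
  have hall : ∀ s : Finset {o // o ∈ T},
      s.card ≤ (s.biUnion (fun o => S.filter (· ≤ (o : α)))).card := by
    intro s
    rcases s.eq_empty_or_nonempty with rfl | hs
    · simp
    · obtain ⟨m, hm, hmax⟩ := s.exists_max_image (fun o => (o : α)) hs
      have h1 : s.card = (s.image Subtype.val).card :=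
        (Finset.card_image_of_injective _ Subtype.coe_injective).symm
      have h2 : s.image Subtype.val ⊆ T.filter (· ≤ (m : α)) := by
        intro a ha
        obtain ⟨o, ho, rfl⟩ := Finset.mem_image.1 ha
        exact Finset.mem_filter.2 ⟨o.2, hmax o ho⟩
      have h3 : S.filter (· ≤ (m : α)) ⊆ s.biUnion (fun o => S.filter (· ≤ (o : α))) := by
        intro a ha
        exact Finset.mem_biUnion.2 ⟨m, hm, ha⟩
      calc s.card = (s.image Subtype.val).card := h1
        _ ≤ (T.filter (· ≤ (m : α))).card := Finset.card_le_card h2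
        _ ≤ (S.filter (· ≤ (m : α))).card := h _
        _ ≤ _ := Finset.card_le_card h3
  obtain ⟨f, finj, hf⟩ := (Finset.all_card_le_biUnion_card_iff_exists_injective _).1 hall
  refine ⟨fun a => if h : a ∈ T then f ⟨a, h⟩ else a, ?_, ?_, ?_⟩
  · intro a ha b hb hab
    rw [Finset.mem_coe] at ha hb
    simp only [dif_pos ha, dif_pos hb] at hab
    exact Subtype.ext_iff.1 (finj hab)
  · intro o ho
    simp only [dif_pos ho]
    exact (Finset.mem_filter.1 (hf ⟨o, ho⟩)).1
  · intro o ho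
    simp only [dif_pos ho]
    have hle : f ⟨o, ho⟩ ≤ o := (Finset.mem_filter.1 (hf ⟨o, ho⟩)).2
    rcases lt_or_eq_of_le hle with hc | hc
    · exact Or.inr hc
    · exact Or.inl hc

lemma eq_of_atLeastPC_both {S T : Finset α} (hcard : S.card = T.card)
    (hST : AtLeastPC (· < ·) S T) (hTS : AtLeastPC (· < ·) T S) : S = T := by
  obtain ⟨f, finj, fmem, fle'⟩ := hST
  obtain ⟨g, ginj, gmem, gle'⟩ := hTS
  have fle : ∀ o ∈ T, f o ≤ o := fun o ho => (fle' o ho).elim le_of_eq (fun h => h.le)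
  have gle : ∀ o ∈ S, g o ≤ o := fun o ho => (gle' o ho).elim le_of_eq (fun h => h.le)
  set h : α → α := fun o => g (f o) with hh
  have hmem : ∀ o ∈ T, h o ∈ T := fun o ho => gmem _ (fmem o ho)
  have hle : ∀ o ∈ T, h o ≤ o := fun o ho => (gle _ (fmem o ho)).trans (fle o ho)
  have hinj : Set.InjOn h T := by
    intro a ha b hb hab
    exact finj ha hb (ginj (fmem a ha) (fmem b hb) hab)
  have hid : ∀ o ∈ T, h o = o := by
    by_contra hc
    push_neg at hc
    set B := T.filter (fun o => h o ≠ o) with hB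
    have hBne : B.Nonempty := by
      obtain ⟨o, ho, hne⟩ := hc
      exact ⟨o, Finset.mem_filter.2 ⟨ho, hne⟩⟩
    set o := B.min' hBne with ho
    have hoB : o ∈ B := B.min'_mem hBne
    have hoT : o ∈ T := (Finset.mem_filter.1 hoB).1
    have hone : h o ≠ o := (Finset.mem_filter.1 hoB).2
    have hlt : h o < o := lt_of_le_of_ne (hle o hoT) hone
    have hhoT : h o ∈ T := hmem o hoT
    have hnotB : h o ∉ B := fun hmem' => absurd (B.min'_le _ hmem') (not_le.2 hlt)
    have : h (h o) = h o := by
      by_contra hne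
      exact hnotB (Finset.mem_filter.2 ⟨hhoT, hne⟩)
    exact hone (hinj hhoT hoT this)
  have hsub : T ⊆ S := by
    intro o ho
    have h1 : o ≤ f o := by
      calc o = h o := (hid o ho).symm
        _ ≤ f o := gle _ (fmem o ho)
    have : f o = o := le_antisymm (fle o ho) h1
    exact this ▸ fmem o ho
  exact (Finset.eq_of_subset_of_card_le hsub (le_of_eq hcard)).symm

lemma replaceStep_card {T T' : Finset α} (h : ReplaceStep (· < ·) T T') : T'.card = T.card := by
  obtain ⟨x, hx, y, hy, _, rfl⟩ := h
  rw [Finset.card_insert_of_notMem (fun hmem => hy (Finset.mem_of_mem_erase hmem)),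
    Finset.card_erase_of_mem hx]
  exact Nat.succ_pred_eq_of_pos (Finset.card_pos.2 ⟨x, hx⟩)

lemma replaceStep_ne {T T' : Finset α} (h : ReplaceStep (· < ·) T T') : T' ≠ T := by
  obtain ⟨x, hx, y, hy, _, rfl⟩ := h
  intro he
  exact hy (he ▸ Finset.mem_insert_self y _)

lemma atLeastPC_of_replaceStep {T T' : Finset α} (h : ReplaceStep (· < ·) T T') :
    AtLeastPC (· < ·) T' T := by
  obtain ⟨x, hx, y, hy, hyx, rfl⟩ := h
  refine ⟨fun o => if o = x then y else o, ?_, ?_, ?_⟩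
  · intro a ha b hb hab
    rw [Finset.mem_coe] at ha hb
    change (if a = x then y else a) = (if b = x then y else b) at hab
    by_cases hax : a = x <;> by_cases hbx : b = x
    · rw [hax, hbx]
    · rw [if_pos hax, if_neg hbx] at hab
      exact absurd (hab ▸ hb) hy
    · rw [if_neg hax, if_pos hbx] at hab
      exact absurd (hab.symm ▸ ha) hy
    · rwa [if_neg hax, if_neg hbx] at hab
  · intro o ho
    by_cases hox : o = x
    · simp [hox]
    · simp only [if_neg hox]
      exact Finset.mem_insert_of_mem (Finset.mem_erase.2 ⟨hox, ho⟩)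
  · intro o ho
    by_cases hox : o = x
    · right; simpa [hox] using hyx
    · left; simp [hox]

lemma atLeastPC_refl (S : Finset α) : AtLeastPC (· < ·) S S :=
  ⟨id, Function.injective_id.injOn, fun o ho => ho, fun o _ => Or.inl rfl⟩

lemma atLeastPC_trans {U S T : Finset α} (h1 : AtLeastPC (· < ·) U S)
    (h2 : AtLeastPC (· < ·) S T) : AtLeastPC (· < ·) U T := by
  obtain ⟨g, ginj, gmem, gle⟩ := h1
  obtain ⟨f, finj, fmem, fle⟩ := h2
  refine ⟨g ∘ f, ?_, fun o ho => gmem _ (fmem o ho), ?_⟩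
  · intro a ha b hb hab
    exact finj ha hb (ginj (fmem a ha) (fmem b hb) hab)
  · intro o ho
    rcases gle _ (fmem o ho) with h | h <;> rcases fle o ho with h' | h'
    · left; show g (f o) = o; rw [h, h']
    · right; show g (f o) < o; rw [h]; exact h'
    · right; rw [h'] at h; show g (f o) < o; rw [h']; exact h
    · right; exact h.trans h'

end Aux

section Main
variable {α : Type*} [DecidableEq α] [LinearOrder α]

open Relation

lemma replace_chain_atLeastPC {T S : Finset α}
    (h : Relation.ReflTransGen (ReplaceStep (· < ·)) T S) :
    AtLeastPC (· < ·) S T ∧ S.card = T.card := by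
  induction h with
  | refl => exact ⟨atLeastPC_refl T, rfl⟩
  | tail _ hstep ih =>
    exact ⟨atLeastPC_trans (atLeastPC_of_replaceStep hstep) ih.1,
      (replaceStep_card hstep).trans ih.2⟩

lemma not_atLeastPC_of_transGen {T S : Finset α}
    (h : Relation.TransGen (ReplaceStep (· < ·)) T S) :
    AtLeastPC (· < ·) S T ∧ ¬ AtLeastPC (· < ·) T S := by
  obtain ⟨b, hchain, hstep⟩ : ∃ b, Relation.ReflTransGen (ReplaceStep (· < ·)) T b ∧
      ReplaceStep (· < ·) b S := by
    cases h with
    | single h' => exact ⟨T, Relation.ReflTransGen.refl, h'⟩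
    | tail h₁ h₂ => exact ⟨_, h₁.to_reflTransGen, h₂⟩
  obtain ⟨hbT, hcardbT⟩ := replace_chain_atLeastPC hchain
  have hSb := atLeastPC_of_replaceStep hstep
  refine ⟨atLeastPC_trans hSb hbT, ?_⟩
  intro hTS
  have hbS : AtLeastPC (· < ·) b S := atLeastPC_trans hbT hTS
  have hcard : S.card = b.card := replaceStep_card hstep
  exact replaceStep_ne hstep (eq_of_atLeastPC_both hcard hSb hbS)

lemma key_replacements : ∀ n : ℕ, ∀ S T : Finset α, (S \ T).card ≤ n → S.card = T.card →
    AtLeastPC (· < ·) S T → S ≠ T → Relation.TransGen (ReplaceStep (· < ·)) T S := by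
  intro n
  induction n with
  | zero =>
    intro S T h hc _ hne
    exact absurd (Finset.eq_of_subset_of_card_le
      (Finset.sdiff_eq_empty_iff_subset.1 (Finset.card_eq_zero.1 (Nat.le_zero.1 h)))
      hc.ge) hne
  | succ n ih =>
    intro S T hn hc hpc hne
    have hSTne : (S \ T).Nonempty := by
      rw [Finset.sdiff_nonempty]
      intro hsub
      exact hne (Finset.eq_of_subset_of_card_le hsub hc.ge)
    have hTSne : (T \ S).Nonempty := by
      rw [Finset.sdiff_nonempty]
      intro hsub
      exact hne ((Finset.eq_of_subset_of_card_le hsub hc.le).symm)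
    set x := (T \ S).max' hTSne with hxdef
    set y := (S \ T).max' hSTne with hydef
    have hxTS : x ∈ T \ S := (T \ S).max'_mem hTSne
    have hyST : y ∈ S \ T := (S \ T).max'_mem hSTne
    have hxT : x ∈ T := (Finset.mem_sdiff.1 hxTS).1
    have hxS : x ∉ S := (Finset.mem_sdiff.1 hxTS).2
    have hyS : y ∈ S := (Finset.mem_sdiff.1 hyST).1
    have hyT : y ∉ T := (Finset.mem_sdiff.1 hyST).2
    have hyx : y < x := by
      rcases lt_trichotomy y x with h | h | h
      · exact h
      · exact absurd (h ▸ hyS) hxS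
      · exfalso
        have hcnt : (T.filter (· < y)).card ≤ (S.filter (· < y)).card :=
          counts_of_atLeastPC hpc (· < y) (fun a b hab hb => lt_of_le_of_lt hab hb)
        have hS := Finset.card_filter_add_card_filter_not (s := S) (p := (· < y))
        have hT := Finset.card_filter_add_card_filter_not (s := T) (p := (· < y))
        have hsub : T.filter (fun a => ¬ a < y) ⊆ (S.filter (fun a => ¬ a < y)).erase y := by
          intro a ha
          obtain ⟨haT, hay⟩ := Finset.mem_filter.1 ha
          have hane : a ≠ y := fun h' => hyT (h' ▸ haT)
          have haS : a ∈ S := by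
            by_contra haS
            have hmem : a ∈ T \ S := Finset.mem_sdiff.2 ⟨haT, haS⟩
            have hax : a ≤ x := (T \ S).le_max' a hmem
            have : y < a := lt_of_le_of_ne (not_lt.1 hay) (Ne.symm hane)
            exact absurd (hax.trans_lt h) (not_lt.2 this.le)
          exact Finset.mem_erase.2 ⟨hane, Finset.mem_filter.2 ⟨haS, hay⟩⟩
        have hyf : y ∈ S.filter (fun a => ¬ a < y) :=
          Finset.mem_filter.2 ⟨hyS, lt_irrefl y⟩
        have h1 : (T.filter (fun a => ¬ a < y)).card ≤
            ((S.filter (fun a => ¬ a < y)).erase y).card := Finset.card_le_card hsub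
        have h2 : ((S.filter (fun a => ¬ a < y)).erase y).card =
            (S.filter (fun a => ¬ a < y)).card - 1 := Finset.card_erase_of_mem hyf
        have h3 : 0 < (S.filter (fun a => ¬ a < y)).card := Finset.card_pos.2 ⟨y, hyf⟩
        omega
    set T' := insert y (T.erase x) with hT'def
    have hstep : ReplaceStep (· < ·) T T' := ⟨x, hxT, y, hyT, hyx, rfl⟩
    have hpc' : AtLeastPC (· < ·) S T' := by
      apply atLeastPC_of_counts
      intro t
      have hbase := counts_of_atLeastPC hpc (· ≤ t) (fun a b hab hb => hab.trans hb)
      by_cases hyt : y ≤ t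
      · have hfilter : T'.filter (· ≤ t) = insert y ((T.filter (· ≤ t)).erase x) := by
          rw [hT'def, Finset.filter_insert, if_pos hyt, Finset.filter_erase]
        by_cases hxt : x ≤ t
        · have hxf : x ∈ T.filter (· ≤ t) := Finset.mem_filter.2 ⟨hxT, hxt⟩
          have hyf : y ∉ (T.filter (· ≤ t)).erase x :=
            fun h' => hyT (Finset.mem_filter.1 (Finset.mem_of_mem_erase h')).1
          rw [hfilter, Finset.card_insert_of_notMem hyf, Finset.card_erase_of_mem hxf]
          have : 0 < (T.filter (· ≤ t)).card := Finset.card_pos.2 ⟨x, hxf⟩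
          omega
        · -- y ≤ t < x : need strict inequality
          have hxf : x ∉ T.filter (· ≤ t) := fun h' => hxt (Finset.mem_filter.1 h').2
          have hyf : y ∉ (T.filter (· ≤ t)).erase x :=
            fun h' => hyT (Finset.mem_filter.1 (Finset.mem_of_mem_erase h')).1
          rw [hfilter, Finset.erase_eq_of_notMem hxf, Finset.card_insert_of_notMem
            (fun h' => hyT (Finset.mem_filter.1 h').1)]
          -- show strict: T.filter count < S.filter count
          have hstrict : (T.filter (· ≤ t)).card < (S.filter (· ≤ t)).card := by
            have hS := Finset.card_filter_add_card_filter_not (s := S) (p := (· ≤ t))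
            have hT := Finset.card_filter_add_card_filter_not (s := T) (p := (· ≤ t))
            have hsub : insert x (S.filter (fun a => ¬ a ≤ t)) ⊆
                T.filter (fun a => ¬ a ≤ t) := by
              intro a ha
              rcases Finset.mem_insert.1 ha with rfl | ha'
              · exact Finset.mem_filter.2 ⟨hxT, hxt⟩
              · obtain ⟨haS, hat⟩ := Finset.mem_filter.1 ha'
                have haT : a ∈ T := by
                  by_contra haT
                  have hmem : a ∈ S \ T := Finset.mem_sdiff.2 ⟨haS, haT⟩
                  have hay : a ≤ y := (S \ T).le_max' a hmem
                  exact hat (hay.trans hyt)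
                exact Finset.mem_filter.2 ⟨haT, hat⟩
            have hxnot : x ∉ S.filter (fun a => ¬ a ≤ t) :=
              fun h' => hxS (Finset.mem_filter.1 h').1
            have h1 := Finset.card_le_card hsub
            rw [Finset.card_insert_of_notMem hxnot] at h1
            omega
          omega
      · -- t < y, so also t < x
        have hxt : ¬ x ≤ t := fun h' => hyt ((hyx.le).trans h')
        have hxf : x ∉ T.filter (· ≤ t) := fun h' => hxt (Finset.mem_filter.1 h').2
        have hfilter : T'.filter (· ≤ t) = T.filter (· ≤ t) := by
          rw [hT'def, Finset.filter_insert, if_neg hyt, Finset.filter_erase,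
            Finset.erase_eq_of_notMem hxf]
        rw [hfilter]
        exact hbase
    have hmeas : S \ T' = (S \ T).erase y := by
      ext a
      simp only [hT'def, Finset.mem_sdiff, Finset.mem_insert, Finset.mem_erase]
      constructor
      · rintro ⟨haS, hnot⟩
        push_neg at hnot
        exact ⟨hnot.1, haS, fun haT => hnot.2 (fun hax => hxS (hax ▸ haS)) haT⟩
      · rintro ⟨hay, haS, haT⟩
        refine ⟨haS, ?_⟩
        push_neg
        exact ⟨hay, fun _ => haT⟩
    by_cases hST' : S = T'
    · exact hST' ▸ Relation.TransGen.single hstep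
    · have hcard' : S.card = T'.card := hc.trans (replaceStep_card hstep).symm
      have hmn : (S \ T').card ≤ n := by
        rw [hmeas, Finset.card_erase_of_mem hyST]
        omega
      exact Relation.TransGen.head hstep (ih S T' hmn hcard' hpc' hST')

end Main


/-- For equal-size sets, strict pairwise-comparison preference of `S`
over `T` holds iff `S` results from `T` by a nonempty finite sequence of replacements,
each exchanging an item for a strictly more preferred item not in the current set. -/
theorem strict_PC_iff_replacements {α : Type*} [Fintype α] [DecidableEq α]
    (r : α → α → Prop) [IsStrictTotalOrder α r] (S T : Finset α)
    (hcard : S.card = T.card) :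
    (AtLeastPC r S T ∧ ¬ AtLeastPC r T S) ↔
      Relation.TransGen (ReplaceStep r) T S := by
  haveI : DecidableRel r := fun a b => Classical.dec _
  letI : LinearOrder α := linearOrderOfSTO r
  have hAL : ∀ U V : Finset α, AtLeastPC r U V ↔ AtLeastPC (· < ·) U V :=
    fun _ _ => Iff.rfl
  have hRS : Relation.TransGen (ReplaceStep r) T S ↔
      Relation.TransGen (ReplaceStep (· < ·)) T S := Iff.rfl
  rw [hRS]
  constructor
  · rintro ⟨h1, h2⟩
    have hne : S ≠ T := by
      rintro rfl
      exact h2 ((hAL S S).2 (atLeastPC_refl S))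
    exact key_replacements (S \ T).card S T le_rfl hcard ((hAL S T).1 h1) hne
  · intro h
    obtain ⟨h1, h2⟩ := not_atLeastPC_of_transGen h
    exact ⟨(hAL S T).2 h1, fun hc => h2 ((hAL T S).1 hc)⟩
end
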